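/- arXiv:1304.7338 — 4 statements merged into one kernel-verified Lean document; each statement's English description precedes it below -/
import Mathlib

section
/- Let (L,[·,·],α) be a multiplicative hom-Lie superalgebra over an infinite field K with α bijective, and let ψ : L × L → L be an even bilinear map satisfying ψ(x,y) = -(-1)^{|x||y|}ψ(y,x) and α(ψ(u,v)) = ψ(α(u),α(v)) for all homogeneous u,v. Then the bracket [u,v]_t := [u,v] + tψ(u,v) makes (L,[·,·]_t,α) a hom-Lie superalgebra for every t ∈ K if and only if both of the following hold for all homogeneous u,v,w: (-1)^{|u||w|}ψ(α(u),ψ(v,w)) + (-1)^{|u||v|}ψ(α(v),ψ(w,u)) + (-1)^{|v||w|}ψ(α(w),ψ(u,v)) = 0, and (-1)^{|u||w|}(ψ(α(u),[v,w]) + [α(u),ψ(v,w)]) + (-1)^{|u||v|}(ψ(α(v),[w,u]) + [α(v),ψ(w,u)]) + (-1)^{|v||w|}(ψ(α(w),[u,v]) + [α(w),ψ(u,v)]) = 0. -/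
/-! The Jacobi sum of the deformed bracket `[·,·] + t ψ` is a polynomial of degree two in `t`:
its constant term is the Jacobi sum of `[·,·]`, which vanishes, its linear coefficient is the
mixed sum and its quadratic coefficient the Jacobi sum of `ψ`. Over an infinite field such a
polynomial vanishes identically iff both coefficients vanish. -/

open Module

/-- The sign `(-1)^{ij}` for degrees `i j : ZMod 2`, valued in the field `K`. -/
def sgn (K : Type*) [Field K] (i j : ZMod 2) : K := (-1 : K) ^ (i.val * j.val)

/-- The raw data of a hom-Lie superalgebra on a `K`-vector space `L`:
a `ZMod 2`-grading, a bilinear bracket and a linear map `α`. -/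
structure HomLieSuperData (K : Type*) [Field K] (L : Type*) [AddCommGroup L] [Module K L] where
  grading : ZMod 2 → Submodule K L
  bracket : L →ₗ[K] L →ₗ[K] L
  alpha : L →ₗ[K] L

namespace HomLieSuperData

variable {K : Type*} [Field K] {L : Type*} [AddCommGroup L] [Module K L]

/-- The axioms making the data of `HomLieSuperData` into a hom-Lie superalgebra. -/
structure IsHomLieSuper (D : HomLieSuperData K L) : Prop where
  internal : DirectSum.IsInternal D.grading
  bracket_even : ∀ i j : ZMod 2, ∀ x ∈ D.grading i, ∀ y ∈ D.grading j,
    D.bracket x y ∈ D.grading (i + j)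
  alpha_even : ∀ i : ZMod 2, ∀ x ∈ D.grading i, D.alpha x ∈ D.grading i
  skew : ∀ i j : ZMod 2, ∀ x ∈ D.grading i, ∀ y ∈ D.grading j,
    D.bracket x y = -(sgn K i j) • D.bracket y x
  jacobi : ∀ i j k : ZMod 2, ∀ x ∈ D.grading i, ∀ y ∈ D.grading j, ∀ z ∈ D.grading k,
    sgn K i k • D.bracket (D.alpha x) (D.bracket y z)
      + sgn K i j • D.bracket (D.alpha y) (D.bracket z x)
      + sgn K j k • D.bracket (D.alpha z) (D.bracket x y) = 0

/-- `D` is multiplicative if `α` is a morphism for the bracket. -/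
def IsMultiplicative (D : HomLieSuperData K L) : Prop :=
  ∀ x y : L, D.alpha (D.bracket x y) = D.bracket (D.alpha x) (D.alpha y)

end HomLieSuperData

theorem eq_zero_of_forall_smul_add_mul_self_smul_eq_zero {K M : Type*} [Field K] [Infinite K]
    [AddCommGroup M] [Module K M] {x y : M} (h : ∀ t : K, t • x + (t * t) • y = 0) :
    x = 0 ∧ y = 0 := by
  classical
  have hlin : ∀ t : K, t ≠ 0 → x + t • y = 0 := fun t ht => by
    have ht' := h t
    rw [mul_smul, ← smul_add] at ht'
    exact (smul_eq_zero.mp ht').resolve_left ht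
  obtain ⟨a, ha⟩ := exists_ne (0 : K)
  obtain ⟨b, hb⟩ := Infinite.exists_notMem_finset ({0, a} : Finset K)
  simp only [Finset.mem_insert, Finset.mem_singleton, not_or] at hb
  have hab : (a - b) • y = 0 := by
    rw [sub_smul, ← add_sub_add_left_eq_sub _ _ x, hlin a ha, hlin b hb.1, sub_zero]
  have hy : y = 0 := (smul_eq_zero.mp hab).resolve_left (sub_ne_zero.mpr (Ne.symm hb.2))
  refine ⟨?_, hy⟩
  simpa only [hy, smul_zero, add_zero] using hlin a ha

namespace HomLieSuperData

variable {K : Type*} [Field K] {L : Type*} [AddCommGroup L] [Module K L]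

variable (K) in
def superCyclicSum (T : L → L → L → L) (i j k : ZMod 2) (u v w : L) : L :=
  sgn K i k • T u v w + sgn K i j • T v w u + sgn K j k • T w u v

def deform (D : HomLieSuperData K L) (ψ : L →ₗ[K] L →ₗ[K] L) (t : K) : HomLieSuperData K L :=
  { D with bracket := D.bracket + t • ψ }

variable (D : HomLieSuperData K L) (ψ : L →ₗ[K] L →ₗ[K] L)

theorem superCyclicSum_deform (t : K) (i j k : ZMod 2) (u v w : L) :
    superCyclicSum K (fun x y z => (D.deform ψ t).bracket (D.alpha x) ((D.deform ψ t).bracket y z))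
        i j k u v w =
      superCyclicSum K (fun x y z => D.bracket (D.alpha x) (D.bracket y z)) i j k u v w
        + t • superCyclicSum K
            (fun x y z => ψ (D.alpha x) (D.bracket y z) + D.bracket (D.alpha x) (ψ y z))
            i j k u v w
        + (t * t) • superCyclicSum K (fun x y z => ψ (D.alpha x) (ψ y z)) i j k u v w := by
  simp only [superCyclicSum, deform, LinearMap.add_apply, LinearMap.smul_apply, map_add,
    map_smul]
  module

variable {D ψ}

theorem isHomLieSuper_deform_iff (hD : D.IsHomLieSuper)
    (hψeven : ∀ i j : ZMod 2, ∀ x ∈ D.grading i, ∀ y ∈ D.grading j, ψ x y ∈ D.grading (i + j))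
    (hψskew : ∀ i j : ZMod 2, ∀ x ∈ D.grading i, ∀ y ∈ D.grading j,
      ψ x y = -(sgn K i j) • ψ y x) (t : K) :
    (D.deform ψ t).IsHomLieSuper ↔
      ∀ i j k : ZMod 2, ∀ u ∈ D.grading i, ∀ v ∈ D.grading j, ∀ w ∈ D.grading k,
        t • superCyclicSum K
            (fun x y z => ψ (D.alpha x) (D.bracket y z) + D.bracket (D.alpha x) (ψ y z))
            i j k u v w
          + (t * t) • superCyclicSum K (fun x y z => ψ (D.alpha x) (ψ y z)) i j k u v w = 0 := by
  have hjacobi : ∀ i j k : ZMod 2, ∀ u ∈ D.grading i, ∀ v ∈ D.grading j, ∀ w ∈ D.grading k,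
      superCyclicSum K (fun x y z => D.bracket (D.alpha x) (D.bracket y z)) i j k u v w = 0 :=
    hD.jacobi
  constructor
  · intro h i j k u hu v hv w hw
    have hj : superCyclicSum K
        (fun x y z => (D.deform ψ t).bracket (D.alpha x) ((D.deform ψ t).bracket y z))
        i j k u v w = 0 := h.jacobi i j k u hu v hv w hw
    rwa [superCyclicSum_deform, hjacobi i j k u hu v hv w hw, zero_add] at hj
  · intro h
    refine ⟨hD.internal, fun i j x hx y hy => ?_, hD.alpha_even, fun i j x hx y hy => ?_,
      fun i j k u hu v hv w hw => ?_⟩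
    · exact add_mem (hD.bracket_even i j x hx y hy)
        (Submodule.smul_mem _ t (hψeven i j x hx y hy))
    · change D.bracket x y + t • ψ x y = -sgn K i j • (D.bracket y x + t • ψ y x)
      rw [hD.skew i j x hx y hy, hψskew i j x hx y hy]
      module
    · change superCyclicSum K
        (fun x y z => (D.deform ψ t).bracket (D.alpha x) ((D.deform ψ t).bracket y z))
        i j k u v w = 0
      rw [superCyclicSum_deform, hjacobi i j k u hu v hv w hw, zero_add]
      exact h i j k u hu v hv w hw

end HomLieSuperData

theorem deformation_iff_general {K : Type*} [Field K] [Infinite K]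
    {L : Type*} [AddCommGroup L] [Module K L]
    (D : HomLieSuperData K L) (hD : D.IsHomLieSuper)
    (ψ : L →ₗ[K] L →ₗ[K] L)
    (hψeven : ∀ i j : ZMod 2, ∀ x ∈ D.grading i, ∀ y ∈ D.grading j, ψ x y ∈ D.grading (i + j))
    (hψskew : ∀ i j : ZMod 2, ∀ x ∈ D.grading i, ∀ y ∈ D.grading j,
      ψ x y = -(sgn K i j) • ψ y x) :
    (∀ t : K, ({ D with bracket := D.bracket + t • ψ } : HomLieSuperData K L).IsHomLieSuper) ↔
      ((∀ i j k : ZMod 2, ∀ u ∈ D.grading i, ∀ v ∈ D.grading j, ∀ w ∈ D.grading k,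
          sgn K i k • ψ (D.alpha u) (ψ v w) + sgn K i j • ψ (D.alpha v) (ψ w u)
            + sgn K j k • ψ (D.alpha w) (ψ u v) = 0) ∧
        (∀ i j k : ZMod 2, ∀ u ∈ D.grading i, ∀ v ∈ D.grading j, ∀ w ∈ D.grading k,
          sgn K i k • (ψ (D.alpha u) (D.bracket v w) + D.bracket (D.alpha u) (ψ v w))
            + sgn K i j • (ψ (D.alpha v) (D.bracket w u) + D.bracket (D.alpha v) (ψ w u))
            + sgn K j k • (ψ (D.alpha w) (D.bracket u v) + D.bracket (D.alpha w) (ψ u v))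
            = 0)) := by
  change (∀ t : K, (D.deform ψ t).IsHomLieSuper) ↔ _
  simp only [HomLieSuperData.isHomLieSuper_deform_iff hD hψeven hψskew]
  constructor
  · intro h
    have hcoeffs := fun i j k u hu v hv w hw =>
      eq_zero_of_forall_smul_add_mul_self_smul_eq_zero fun t => h t i j k u hu v hv w hw
    exact ⟨fun i j k u hu v hv w hw => (hcoeffs i j k u hu v hv w hw).2,
      fun i j k u hu v hv w hw => (hcoeffs i j k u hu v hv w hw).1⟩
  · rintro ⟨hψψ, hmixed⟩ t i j k u hu v hv w hw
    simp only [HomLieSuperData.superCyclicSum]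
    rw [hψψ i j k u hu v hv w hw, hmixed i j k u hu v hv w hw, smul_zero, smul_zero, add_zero]

/-- For a regular multiplicative hom-Lie superalgebra `(L,[·,·],α)` over an
infinite field and an even super-skewsymmetric bilinear map `ψ` commuting with `α`, the
deformed bracket `[u,v]_t = [u,v] + t ψ(u,v)` is a hom-Lie superalgebra structure for every
`t` if and only if `ψ` satisfies the hom-super-Jacobi identity and the mixed identity with
the original bracket. -/
theorem deformation_iff {K : Type*} [Field K] [Infinite K]
    {L : Type*} [AddCommGroup L] [Module K L]
    (D : HomLieSuperData K L) (hD : D.IsHomLieSuper)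
    (hmul : D.IsMultiplicative) (hreg : Function.Bijective D.alpha)
    (ψ : L →ₗ[K] L →ₗ[K] L)
    (hψeven : ∀ i j : ZMod 2, ∀ x ∈ D.grading i, ∀ y ∈ D.grading j, ψ x y ∈ D.grading (i + j))
    (hψskew : ∀ i j : ZMod 2, ∀ x ∈ D.grading i, ∀ y ∈ D.grading j,
      ψ x y = -(sgn K i j) • ψ y x)
    (hψα : ∀ i j : ZMod 2, ∀ x ∈ D.grading i, ∀ y ∈ D.grading j,
      D.alpha (ψ x y) = ψ (D.alpha x) (D.alpha y)) :
    (∀ t : K, ({ D with bracket := D.bracket + t • ψ } : HomLieSuperData K L).IsHomLieSuper) ↔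
      ((∀ i j k : ZMod 2, ∀ u ∈ D.grading i, ∀ v ∈ D.grading j, ∀ w ∈ D.grading k,
          sgn K i k • ψ (D.alpha u) (ψ v w) + sgn K i j • ψ (D.alpha v) (ψ w u)
            + sgn K j k • ψ (D.alpha w) (ψ u v) = 0) ∧
        (∀ i j k : ZMod 2, ∀ u ∈ D.grading i, ∀ v ∈ D.grading j, ∀ w ∈ D.grading k,
          sgn K i k • (ψ (D.alpha u) (D.bracket v w) + D.bracket (D.alpha u) (ψ v w))
            + sgn K i j • (ψ (D.alpha v) (D.bracket w u) + D.bracket (D.alpha v) (ψ w u))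
            + sgn K j k • (ψ (D.alpha w) (D.bracket u v) + D.bracket (D.alpha w) (ψ u v))
            = 0)) :=
  deformation_iff_general D hD ψ hψeven hψskew
end

section
/- Let (L,[·,·],α) be a hom-Lie superalgebra over a field K satisfying ad(x)∘ad(α(y)) - (-1)^{|x||y|} ad(y)∘ad(α(x)) = α∘ad([x,y]) for all homogeneous x,y (so that the coadjoint representation π exists), and let ω : L × L → L* be an even bilinear map. Then (L ⊕ L*, [·,·]_{L⊕L*}, α'), with [x+f, y+g]_{L⊕L*} := [x,y] + ω(x,y) + π(x)g - (-1)^{|x||y|}π(y)f and α'(x+f) := α(x) + f∘α, is a hom-Lie superalgebra if and only if ω is an even 2-cocycle, i.e. ω(x,y) = -(-1)^{|x||y|}ω(y,x) and π(α(x))ω(y,z) - (-1)^{|x||y|}π(α(y))ω(x,z) + (-1)^{(|x|+|y|)|z|}π(α(z))ω(x,y) + ω(α(x),[y,z]) + (-1)^{|y||z|}ω([x,z],α(y)) - ω([x,y],α(z)) = 0 for all homogeneous x,y,z ∈ L. -/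
open Module

namespace HomLieSuperData

variable {K : Type*} [Field K] {L : Type*} [AddCommGroup L] [Module K L]

/-- The induced grading on the dual space: `(L*)_i` consists of the functionals
vanishing on every `L_j` with `j ≠ i`. -/
def dualGrading (D : HomLieSuperData K L) (i : ZMod 2) : Submodule K (Module.Dual K L) where
  carrier := {f | ∀ j : ZMod 2, j ≠ i → ∀ x ∈ D.grading j, f x = 0}
  add_mem' := fun hf hg j hj x hx => by simp [hf j hj x hx, hg j hj x hx]
  zero_mem' := fun j hj x hx => rfl
  smul_mem' := fun c f hf j hj x hx => by simp [hf j hj x hx]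

/-- The coadjoint action on homogeneous elements: for `x` of degree `i` and `f` of degree
`j`, `π(x) f = -(-1)^{ij} f ∘ ad(x)`. -/
def coadj (D : HomLieSuperData K L) (i j : ZMod 2) (x : L) (f : Module.Dual K L) :
    Module.Dual K L :=
  -(sgn K i j) • (f ∘ₗ D.bracket x)

/-- The coadjoint representation of `L` on `L*` exists, i.e.
`ad(x) ∘ ad(α y) - (-1)^{|x||y|} ad(y) ∘ ad(α x) = α ∘ ad([x,y])` on homogeneous elements. -/
def HasCoadjRep (D : HomLieSuperData K L) : Prop :=
  ∀ i j : ZMod 2, ∀ x ∈ D.grading i, ∀ y ∈ D.grading j, ∀ m : L,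
    D.bracket x (D.bracket (D.alpha y) m) - sgn K i j • D.bracket y (D.bracket (D.alpha x) m)
      = D.alpha (D.bracket (D.bracket x y) m)

/-- `ω : L × L → L*` is even: `ω(L_i, L_j) ⊆ (L*)_{i+j}`. -/
def OmegaEven (D : HomLieSuperData K L) (ω : L →ₗ[K] L →ₗ[K] Module.Dual K L) : Prop :=
  ∀ i j : ZMod 2, ∀ x ∈ D.grading i, ∀ y ∈ D.grading j, ω x y ∈ dualGrading D (i + j)

/-- `ω` is super-skewsymmetric. -/
def OmegaSkew (D : HomLieSuperData K L) (ω : L →ₗ[K] L →ₗ[K] Module.Dual K L) : Prop :=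
  ∀ i j : ZMod 2, ∀ x ∈ D.grading i, ∀ y ∈ D.grading j, ω x y = -(sgn K i j) • ω y x

/-- The 2-cocycle identity for `ω` with respect to the coadjoint representation. -/
def OmegaCocycle (D : HomLieSuperData K L) (ω : L →ₗ[K] L →ₗ[K] Module.Dual K L) : Prop :=
  ∀ i j k : ZMod 2, ∀ x ∈ D.grading i, ∀ y ∈ D.grading j, ∀ z ∈ D.grading k,
    coadj D i (j + k) (D.alpha x) (ω y z)
      - sgn K i j • coadj D j (i + k) (D.alpha y) (ω x z)
      + sgn K (i + j) k • coadj D k (i + j) (D.alpha z) (ω x y)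
      + ω (D.alpha x) (D.bracket y z)
      + sgn K j k • ω (D.bracket x z) (D.alpha y)
      - ω (D.bracket x y) (D.alpha z) = 0

/-- `ω` is supercyclic: `ω(x,y)(z) = (-1)^{|x|(|y|+|z|)} ω(y,z)(x)`. -/
def OmegaSupercyclic (D : HomLieSuperData K L) (ω : L →ₗ[K] L →ₗ[K] Module.Dual K L) : Prop :=
  ∀ i j k : ZMod 2, ∀ x ∈ D.grading i, ∀ y ∈ D.grading j, ∀ z ∈ D.grading k,
    ω x y z = sgn K i (j + k) * ω y z x

/-- A bilinear bracket `Bext` on `L ⊕ L*` is the `T*`-extension bracket associated to `ω`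
if on homogeneous elements
`[x+f, y+g] = [x,y] + ω(x,y) + π(x) g - (-1)^{|x||y|} π(y) f`. -/
def IsExtBracket (D : HomLieSuperData K L) (ω : L →ₗ[K] L →ₗ[K] Module.Dual K L)
    (Bext : (L × Module.Dual K L) →ₗ[K] (L × Module.Dual K L) →ₗ[K] (L × Module.Dual K L)) :
    Prop :=
  ∀ (i j : ZMod 2) (x y : L) (f g : Module.Dual K L),
    x ∈ D.grading i → f ∈ dualGrading D i → y ∈ D.grading j → g ∈ dualGrading D j →
      Bext (x, f) (y, g) =
        (D.bracket x y, ω x y + coadj D i j x g - sgn K i j • coadj D j i y f)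

/-- The `T*`-extension data on `L ⊕ L*` with a given bracket `Bext`: the grading is
`(L ⊕ L*)_i = L_i ⊕ (L*)_i` and the structure map is `α'(x+f) = α(x) + f ∘ α`. -/
def extData (D : HomLieSuperData K L)
    (Bext : (L × Module.Dual K L) →ₗ[K] (L × Module.Dual K L) →ₗ[K] (L × Module.Dual K L)) :
    HomLieSuperData K (L × Module.Dual K L) where
  grading i := (D.grading i).prod (dualGrading D i)
  bracket := Bext
  alpha := D.alpha.prodMap D.alpha.dualMap

/-- The derived series `L^(0) = L`, `L^(n+1) = [L^(n), L^(n)]`. -/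
def derivedSeries (D : HomLieSuperData K L) : ℕ → Submodule K L
  | 0 => ⊤
  | n + 1 => Submodule.span K
      {z | ∃ x ∈ derivedSeries D n, ∃ y ∈ derivedSeries D n, z = D.bracket x y}

/-- The central descending series `L^0 = L`, `L^{n+1} = [L^n, L]`. -/
def lowerCentral (D : HomLieSuperData K L) : ℕ → Submodule K L
  | 0 => ⊤
  | n + 1 => Submodule.span K {z | ∃ x ∈ lowerCentral D n, ∃ y : L, z = D.bracket x y}

/-- `D` is solvable of length exactly `k`. -/
def IsSolvableOfLength (D : HomLieSuperData K L) (k : ℕ) : Prop :=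
  derivedSeries D k = ⊥ ∧ ∀ m < k, derivedSeries D m ≠ ⊥

/-- `D` is nilpotent of length exactly `k`. -/
def IsNilpotentOfLength (D : HomLieSuperData K L) (k : ℕ) : Prop :=
  lowerCentral D k = ⊥ ∧ ∀ m < k, lowerCentral D m ≠ ⊥

end HomLieSuperData

/-! If the first argument of the Jacobiator of `L ⊕ L*` is a functional `f`, then `f` is the
only functional left in it, because the bracket of two functionals vanishes; evaluated at `m`
it is, up to a sign, `f(α[[y,z],m]) - f([y,[α z,m]]) + (-1)^{|y||z|} f([z,[α y,m]])`, which is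
zero by the identity defining the coadjoint representation. As the Jacobiator is additive and
invariant under cyclic permutations, it therefore only depends on the `L`-components of its
arguments. On elements of `L` its `L*`-component is `(-1)^{|x||z|}` times the cocycle
expression as soon as `ω` is super-skew, and super-skewness of `ω` is the `L*`-component of the
skew-symmetry of the extension on `L`. -/

section Sign

variable (K : Type*) [Field K]

lemma sgn_comm (i j : ZMod 2) : sgn K i j = sgn K j i := by
  rw [sgn, sgn, Nat.mul_comm]

lemma sgn_mul_self (i j : ZMod 2) : sgn K i j * sgn K i j = 1 := by
  rw [sgn, ← pow_add, ← two_mul, pow_mul, neg_one_sq, one_pow]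

lemma sgn_mul_self_assoc (i j : ZMod 2) (a : K) : sgn K i j * (sgn K i j * a) = a := by
  rw [← mul_assoc, sgn_mul_self, one_mul]

lemma sgn_add_left (i j k : ZMod 2) : sgn K (i + j) k = sgn K i k * sgn K j k := by
  rw [sgn, sgn, sgn, ← pow_add, ← add_mul, ZMod.val_add, neg_one_pow_eq_pow_mod_two,
    Nat.mod_mul_mod, ← neg_one_pow_eq_pow_mod_two]

lemma sgn_add_right (i j k : ZMod 2) : sgn K i (j + k) = sgn K i j * sgn K i k := by
  rw [sgn_comm, sgn_add_left, sgn_comm K j, sgn_comm K k]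

lemma sgn_ne_zero (i j : ZMod 2) : sgn K i j ≠ 0 :=
  pow_ne_zero _ (neg_ne_zero.mpr one_ne_zero)

end Sign

lemma ZMod.eq_add_one_of_ne_mod_two {i j : ZMod 2} (h : j ≠ i) : j = i + 1 := by
  revert i j; decide

lemma DirectSum.isInternal_zmod_two_iff_isCompl {R M : Type*} [Ring R] [AddCommGroup M]
    [Module R M] (G : ZMod 2 → Submodule R M) :
    DirectSum.IsInternal G ↔ IsCompl (G 0) (G 1) :=
  DirectSum.isInternal_submodule_iff_isCompl G (by decide)
    (Set.eq_univ_of_forall fun i ↦ by revert i; decide).symm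

lemma Submodule.isCompl_prod {R M N : Type*} [Ring R] [AddCommGroup M] [Module R M]
    [AddCommGroup N] [Module R N] {p q : Submodule R M} {p' q' : Submodule R N}
    (h : IsCompl p q) (h' : IsCompl p' q') : IsCompl (p.prod p') (q.prod q') := by
  rw [isCompl_iff, disjoint_iff, codisjoint_iff] at h h' ⊢
  rw [Submodule.prod_inf_prod, Submodule.prod_sup_prod, h.1, h.2, h'.1, h'.2,
    Submodule.prod_bot, Submodule.prod_top]
  exact ⟨rfl, rfl⟩

namespace HomLieSuperData

variable {K : Type*} [Field K] {L : Type*} [AddCommGroup L] [Module K L]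

lemma dualGrading_eq_dualAnnihilator (D : HomLieSuperData K L) (i : ZMod 2) :
    D.dualGrading i = (D.grading (i + 1)).dualAnnihilator := by
  ext f
  simp only [Submodule.mem_dualAnnihilator]
  refine ⟨fun hf x hx ↦ hf _ (add_ne_left.mpr one_ne_zero) x hx, fun hf j hj x hx ↦ ?_⟩
  obtain rfl := ZMod.eq_add_one_of_ne_mod_two hj
  exact hf x hx

lemma isCompl_dualGrading {D : HomLieSuperData K L} (h : IsCompl (D.grading 0) (D.grading 1)) :
    IsCompl (D.dualGrading 0) (D.dualGrading 1) := by
  rw [dualGrading_eq_dualAnnihilator, dualGrading_eq_dualAnnihilator]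
  exact Subspace.isCompl_dualAnnihilator h.symm

lemma coadj_apply (D : HomLieSuperData K L) (i j : ZMod 2) (x : L) (f : Dual K L) (m : L) :
    D.coadj i j x f m = -sgn K i j * f (D.bracket x m) := by
  simp [coadj]

lemma coadj_mem {D : HomLieSuperData K L} (hD : D.IsHomLieSuper) {i j : ZMod 2} {x : L}
    {f : Dual K L} (hx : x ∈ D.grading i) (hf : f ∈ D.dualGrading j) :
    D.coadj i j x f ∈ D.dualGrading (i + j) := by
  intro l hl m hm
  have hne : i + l ≠ j := fun h ↦
    hl (by rw [← h, ← add_assoc, CharTwo.add_self_eq_zero, zero_add])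
  rw [coadj_apply, hf _ hne _ (hD.bracket_even i l x hx m hm), mul_zero]

lemma dualMap_alpha_mem {D : HomLieSuperData K L} (hD : D.IsHomLieSuper) {i : ZMod 2}
    {f : Dual K L} (hf : f ∈ D.dualGrading i) : D.alpha.dualMap f ∈ D.dualGrading i :=
  fun j hj m hm ↦ hf j hj (D.alpha m) (hD.alpha_even j m hm)

def jacobiator (D : HomLieSuperData K L) (i j k : ZMod 2) (x y z : L) : L :=
  sgn K i k • D.bracket (D.alpha x) (D.bracket y z)
    + sgn K i j • D.bracket (D.alpha y) (D.bracket z x)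
    + sgn K j k • D.bracket (D.alpha z) (D.bracket x y)

lemma IsHomLieSuper.jacobiator_eq_zero {D : HomLieSuperData K L} (hD : D.IsHomLieSuper)
    {i j k : ZMod 2} {x y z : L} (hx : x ∈ D.grading i) (hy : y ∈ D.grading j)
    (hz : z ∈ D.grading k) : D.jacobiator i j k x y z = 0 :=
  hD.jacobi i j k x hx y hy z hz

lemma jacobiator_cycle (D : HomLieSuperData K L) (i j k : ZMod 2) (x y z : L) :
    D.jacobiator i j k x y z = D.jacobiator j k i y z x := by
  rw [jacobiator, jacobiator, sgn_comm K j i, sgn_comm K k i]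
  abel

lemma jacobiator_add_left (D : HomLieSuperData K L) (i j k : ZMod 2) (x x' y z : L) :
    D.jacobiator i j k (x + x') y z = D.jacobiator i j k x y z + D.jacobiator i j k x' y z := by
  simp only [jacobiator, map_add, LinearMap.add_apply, smul_add]
  abel

def cocycleDefect (D : HomLieSuperData K L) (ω : L →ₗ[K] L →ₗ[K] Dual K L) (i j k : ZMod 2)
    (x y z : L) : Dual K L :=
  coadj D i (j + k) (D.alpha x) (ω y z)
    - sgn K i j • coadj D j (i + k) (D.alpha y) (ω x z)
    + sgn K (i + j) k • coadj D k (i + j) (D.alpha z) (ω x y)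
    + ω (D.alpha x) (D.bracket y z)
    + sgn K j k • ω (D.bracket x z) (D.alpha y)
    - ω (D.bracket x y) (D.alpha z)

variable {ω : L →ₗ[K] L →ₗ[K] Dual K L}
  {Bext : (L × Dual K L) →ₗ[K] (L × Dual K L) →ₗ[K] (L × Dual K L)}

@[simp]
lemma extData_bracket (D : HomLieSuperData K L) : (D.extData Bext).bracket = Bext := rfl

@[simp]
lemma extData_alpha_apply (D : HomLieSuperData K L) (X : L × Dual K L) :
    (D.extData Bext).alpha X = (D.alpha X.1, D.alpha.dualMap X.2) := rfl

lemma isInternal_extData_grading {D : HomLieSuperData K L}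
    (hD : DirectSum.IsInternal D.grading) : DirectSum.IsInternal (D.extData Bext).grading := by
  rw [DirectSum.isInternal_zmod_two_iff_isCompl] at hD ⊢
  exact Submodule.isCompl_prod hD (isCompl_dualGrading hD)

lemma extBracket_apply {D : HomLieSuperData K L} (hBext : D.IsExtBracket ω Bext) {i j : ZMod 2}
    {X Y : L × Dual K L} (hX : X ∈ (D.extData Bext).grading i)
    (hY : Y ∈ (D.extData Bext).grading j) :
    Bext X Y = (D.bracket X.1 Y.1,
      ω X.1 Y.1 + D.coadj i j X.1 Y.2 - sgn K i j • D.coadj j i Y.1 X.2) :=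
  hBext i j X.1 Y.1 X.2 Y.2 hX.1 hX.2 hY.1 hY.2

lemma extBracket_mem {D : HomLieSuperData K L} (hD : D.IsHomLieSuper) (hω : D.OmegaEven ω)
    (hBext : D.IsExtBracket ω Bext) {i j : ZMod 2} {X Y : L × Dual K L}
    (hX : X ∈ (D.extData Bext).grading i) (hY : Y ∈ (D.extData Bext).grading j) :
    Bext X Y ∈ (D.extData Bext).grading (i + j) := by
  rw [extBracket_apply hBext hX hY]
  refine ⟨hD.bracket_even i j _ hX.1 _ hY.1, sub_mem (add_mem (hω i j _ hX.1 _ hY.1)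
    (coadj_mem hD hX.1 hY.2)) (Submodule.smul_mem _ _ ?_)⟩
  rw [add_comm i j]
  exact coadj_mem hD hY.1 hX.2

lemma extAlpha_mem {D : HomLieSuperData K L} (hD : D.IsHomLieSuper) {i : ZMod 2}
    {X : L × Dual K L} (hX : X ∈ (D.extData Bext).grading i) :
    (D.extData Bext).alpha X ∈ (D.extData Bext).grading i :=
  ⟨hD.alpha_even i _ hX.1, dualMap_alpha_mem hD hX.2⟩

lemma inl_mem_extData_grading {D : HomLieSuperData K L} {i : ZMod 2} {x : L}
    (hx : x ∈ D.grading i) : (x, (0 : Dual K L)) ∈ (D.extData Bext).grading i :=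
  ⟨hx, zero_mem _⟩

lemma extData_skew_iff {D : HomLieSuperData K L} (hD : D.IsHomLieSuper)
    (hBext : D.IsExtBracket ω Bext) :
    (∀ i j : ZMod 2, ∀ X ∈ (D.extData Bext).grading i, ∀ Y ∈ (D.extData Bext).grading j,
      Bext X Y = -sgn K i j • Bext Y X) ↔ D.OmegaSkew ω := by
  refine ⟨fun h i j x hx y hy ↦ ?_, fun hskew i j X hX Y hY ↦ ?_⟩
  · have hX := inl_mem_extData_grading (Bext := Bext) hx
    have hY := inl_mem_extData_grading (Bext := Bext) hy
    simpa [extBracket_apply hBext hX hY, extBracket_apply hBext hY hX, coadj]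
      using congr_arg Prod.snd (h i j _ hX _ hY)
  · rw [extBracket_apply hBext hX hY, extBracket_apply hBext hY hX]
    ext m
    · simpa using hD.skew i j _ hX.1 _ hY.1
    · simp only [hskew i j _ hX.1 _ hY.1, LinearMap.sub_apply, LinearMap.add_apply,
        LinearMap.smul_apply, smul_eq_mul, neg_mul, coadj_apply, mul_neg, sub_neg_eq_add,
        Prod.smul_mk, neg_smul]
      simp only [sgn_comm K j i, mul_add, mul_neg, sgn_mul_self_assoc]
      ring

lemma extData_jacobiator_of_fst_eq_zero {D : HomLieSuperData K L} (hD : D.IsHomLieSuper)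
    (hco : D.HasCoadjRep) (hω : D.OmegaEven ω) (hBext : D.IsExtBracket ω Bext)
    {i j k : ZMod 2} {X Y Z : L × Dual K L} (hX : X ∈ (D.extData Bext).grading i)
    (hY : Y ∈ (D.extData Bext).grading j) (hZ : Z ∈ (D.extData Bext).grading k)
    (hX0 : X.1 = 0) : (D.extData Bext).jacobiator i j k X Y Z = 0 := by
  obtain ⟨x, f⟩ := X
  obtain ⟨y, g⟩ := Y
  obtain ⟨z, h⟩ := Z
  obtain rfl : x = 0 := hX0
  simp only [jacobiator, extData_bracket]
  rw [extBracket_apply hBext (extAlpha_mem hD hX) (extBracket_mem hD hω hBext hY hZ),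
    extBracket_apply hBext (extAlpha_mem hD hY) (extBracket_mem hD hω hBext hZ hX),
    extBracket_apply hBext (extAlpha_mem hD hZ) (extBracket_mem hD hω hBext hX hY),
    extBracket_apply hBext hY hZ, extBracket_apply hBext hZ hX, extBracket_apply hBext hX hY]
  ext m
  · simp
  · simp only [extData_alpha_apply, map_zero, LinearMap.zero_apply, zero_add, Prod.smul_mk,
      smul_zero, Prod.mk_add_mk, add_zero, LinearMap.add_apply, LinearMap.smul_apply,
      LinearMap.sub_apply, coadj_apply, mul_zero, smul_eq_mul, LinearMap.dualMap_apply,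
      neg_mul, mul_neg, sub_neg_eq_add, sub_zero, neg_neg, Prod.snd_zero]
    have hc := congr(f $(hco j k y hY.1 z hZ.1 m))
    simp only [map_sub, map_smul, smul_eq_mul] at hc
    -- write every sign in terms of `sgn K i j`, `sgn K i k`, `sgn K j k`; sorting the factors
    -- with `mul_comm` makes equal signs adjacent, so that their squares cancel
    simp only [sgn_add_left, sgn_add_right, sgn_comm K j i, sgn_comm K k i, sgn_comm K k j,
      mul_assoc, mul_comm, mul_left_comm, sgn_mul_self_assoc]
    linear_combination -(sgn K i k) * hc

lemma extData_jacobiator_eq_inl_left {D : HomLieSuperData K L} (hD : D.IsHomLieSuper)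
    (hco : D.HasCoadjRep) (hω : D.OmegaEven ω) (hBext : D.IsExtBracket ω Bext)
    {i j k : ZMod 2} {X Y Z : L × Dual K L} (hX : X ∈ (D.extData Bext).grading i)
    (hY : Y ∈ (D.extData Bext).grading j) (hZ : Z ∈ (D.extData Bext).grading k) :
    (D.extData Bext).jacobiator i j k X Y Z = (D.extData Bext).jacobiator i j k (X.1, 0) Y Z := by
  have hsplit : X = (X.1, 0) + (0, X.2) := Prod.ext (add_zero _).symm (zero_add _).symm
  conv_lhs => rw [hsplit]
  rw [jacobiator_add_left, extData_jacobiator_of_fst_eq_zero hD hco hω hBext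
    (X := (0, X.2)) ⟨zero_mem _, hX.2⟩ hY hZ rfl, add_zero]

lemma extData_jacobiator_eq_inl {D : HomLieSuperData K L} (hD : D.IsHomLieSuper)
    (hco : D.HasCoadjRep) (hω : D.OmegaEven ω) (hBext : D.IsExtBracket ω Bext)
    {i j k : ZMod 2} {X Y Z : L × Dual K L} (hX : X ∈ (D.extData Bext).grading i)
    (hY : Y ∈ (D.extData Bext).grading j) (hZ : Z ∈ (D.extData Bext).grading k) :
    (D.extData Bext).jacobiator i j k X Y Z
      = (D.extData Bext).jacobiator i j k (X.1, 0) (Y.1, 0) (Z.1, 0) := by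
  have hX' := inl_mem_extData_grading (Bext := Bext) hX.1
  have hY' := inl_mem_extData_grading (Bext := Bext) hY.1
  rw [extData_jacobiator_eq_inl_left hD hco hω hBext hX hY hZ, jacobiator_cycle,
    extData_jacobiator_eq_inl_left hD hco hω hBext hY hZ hX', jacobiator_cycle,
    extData_jacobiator_eq_inl_left hD hco hω hBext hZ hX' hY', jacobiator_cycle]

lemma extData_jacobiator_inl {D : HomLieSuperData K L} (hD : D.IsHomLieSuper)
    (hω : D.OmegaEven ω) (hskew : D.OmegaSkew ω) (hBext : D.IsExtBracket ω Bext)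
    {i j k : ZMod 2} {x y z : L} (hx : x ∈ D.grading i) (hy : y ∈ D.grading j)
    (hz : z ∈ D.grading k) :
    (D.extData Bext).jacobiator i j k (x, 0) (y, 0) (z, 0)
      = (D.jacobiator i j k x y z, sgn K i k • D.cocycleDefect ω i j k x y z) := by
  have hX := inl_mem_extData_grading (Bext := Bext) hx
  have hY := inl_mem_extData_grading (Bext := Bext) hy
  have hZ := inl_mem_extData_grading (Bext := Bext) hz
  simp only [jacobiator, extData_bracket]
  rw [extBracket_apply hBext (extAlpha_mem hD hX) (extBracket_mem hD hω hBext hY hZ),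
    extBracket_apply hBext (extAlpha_mem hD hY) (extBracket_mem hD hω hBext hZ hX),
    extBracket_apply hBext (extAlpha_mem hD hZ) (extBracket_mem hD hω hBext hX hY),
    extBracket_apply hBext hY hZ, extBracket_apply hBext hZ hX, extBracket_apply hBext hX hY]
  have hxz := hD.bracket_even i k x hx z hz
  have hxy := hD.bracket_even i j x hx y hy
  ext m
  · simp
  · simp only [extData_alpha_apply, map_zero, Prod.smul_mk, hD.skew k i z hz x hx, neg_smul,
      map_neg, map_smul, hskew j (i + k) _ (hD.alpha_even j y hy) _ hxz, hskew k i z hz x hx,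
      smul_neg, Prod.mk_add_mk, hskew k (i + j) _ (hD.alpha_even k z hz) _ hxy,
      LinearMap.add_apply, LinearMap.smul_apply, LinearMap.sub_apply, coadj_apply,
      LinearMap.zero_apply, mul_zero, add_zero, smul_eq_mul, sub_zero, neg_mul,
      LinearMap.neg_apply, mul_neg, neg_neg, cocycleDefect, sub_neg_eq_add]
    simp only [sgn_add_left, sgn_add_right, sgn_comm K j i, sgn_comm K k i, sgn_comm K k j,
      mul_add, mul_sub, mul_neg, mul_assoc, mul_comm, mul_left_comm, sgn_mul_self_assoc]
    ring

end HomLieSuperData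

/-- Given a hom-Lie superalgebra admitting the coadjoint representation and
an even bilinear `ω : L × L → L*`, the data `(L ⊕ L*, [·,·]_{L⊕L*}, α')` is a hom-Lie
superalgebra if and only if `ω` is an even 2-cocycle (super-skewsymmetric and satisfying
the 2-cocycle identity). -/
theorem extension_isHomLie_iff_cocycle {K : Type*} [Field K]
    {L : Type*} [AddCommGroup L] [Module K L]
    (D : HomLieSuperData K L) (hD : D.IsHomLieSuper) (hco : D.HasCoadjRep)
    (ω : L →ₗ[K] L →ₗ[K] Module.Dual K L) (hωeven : D.OmegaEven ω)
    (Bext : (L × Module.Dual K L) →ₗ[K] (L × Module.Dual K L) →ₗ[K] (L × Module.Dual K L))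
    (hBext : D.IsExtBracket ω Bext) :
    (D.extData Bext).IsHomLieSuper ↔ (D.OmegaSkew ω ∧ D.OmegaCocycle ω) := by
  open HomLieSuperData in
  constructor
  · intro hE
    have hskew : D.OmegaSkew ω := (extData_skew_iff hD hBext).mp hE.skew
    refine ⟨hskew, fun i j k x hx y hy z hz ↦ ?_⟩
    have hJ := hE.jacobiator_eq_zero (inl_mem_extData_grading hx) (inl_mem_extData_grading hy)
      (inl_mem_extData_grading hz)
    rw [extData_jacobiator_inl hD hωeven hskew hBext hx hy hz] at hJ
    exact (smul_eq_zero.mp (congr_arg Prod.snd hJ)).resolve_left (sgn_ne_zero K i k)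
  · rintro ⟨hskew, hcocycle⟩
    refine ⟨isInternal_extData_grading hD.internal,
      fun i j X hX Y hY ↦ extBracket_mem hD hωeven hBext hX hY,
      fun i X hX ↦ extAlpha_mem hD hX, (extData_skew_iff hD hBext).mpr hskew,
      fun i j k X hX Y hY Z hZ ↦ ?_⟩
    change (D.extData Bext).jacobiator i j k X Y Z = 0
    rw [extData_jacobiator_eq_inl hD hco hωeven hBext hX hY hZ,
      extData_jacobiator_inl hD hωeven hskew hBext hX.1 hY.1 hZ.1,
      hD.jacobiator_eq_zero hX.1 hY.1 hZ.1,
      show D.cocycleDefect ω i j k _ _ _ = 0 from hcocycle i j k _ hX.1 _ hY.1 _ hZ.1, smul_zero,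
      Prod.mk_zero_zero]
end

section
/- Let (L,[·,·],α) be a hom-Lie superalgebra over a field K admitting a T*-extension T*_ω L by a supercyclic even 2-cocycle ω. If L is solvable of length k, then T*_ω L is solvable of length r with k ≤ r ≤ k+1. -/
open Module

/-!
The projection `T*_ω L = L ⊕ L* → L` is a surjective morphism of brackets, so it maps the derived
series of `T*_ω L` onto that of `L`. Hence `(T*_ω L)^(m) ≠ 0` for `m < k`, while
`(T*_ω L)^(k)` lies in the kernel `L*`. Since `[L*, L*] = 0` in `T*_ω L`, this forces
`(T*_ω L)^(k+1) = 0`. The bracket of `T*_ω L` is only prescribed on homogeneous elements; both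
facts about it extend to all of `L ⊕ L*` because the grading of `T*_ω L` is internal.
-/

namespace LinearMap

variable {R M M' N : Type*} [CommSemiring R] [AddCommMonoid M] [Module R M]
  [AddCommMonoid M'] [Module R M'] [AddCommMonoid N] [Module R N]

theorem ext_of_iSup_eq_top₂ {ι κ : Type*} {G : ι → Submodule R M} {H : κ → Submodule R M'}
    (hG : ⨆ i, G i = ⊤) (hH : ⨆ j, H j = ⊤) {B B' : M →ₗ[R] M' →ₗ[R] N}
    (h : ∀ i j, ∀ x ∈ G i, ∀ y ∈ H j, B x y = B' x y) : B = B' := by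
  rw [Submodule.iSup_eq_span] at hG hH
  refine ext_on hG fun x hx => ext_on hH fun y hy => ?_
  obtain ⟨i, hx⟩ := Set.mem_iUnion.mp hx
  obtain ⟨j, hy⟩ := Set.mem_iUnion.mp hy
  exact h i j x hx y hy

end LinearMap

namespace HomLieSuperData

variable {K : Type*} [Field K] {L L' : Type*} [AddCommGroup L] [Module K L]
  [AddCommGroup L'] [Module K L']

theorem map_derivedSeries {D : HomLieSuperData K L} {D' : HomLieSuperData K L'}
    (f : L →ₗ[K] L') (hf : ∀ x y, f (D.bracket x y) = D'.bracket (f x) (f y))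
    (hsurj : Function.Surjective f) (n : ℕ) :
    (D.derivedSeries n).map f = D'.derivedSeries n := by
  induction n with
  | zero => exact (Submodule.map_top f).trans (LinearMap.range_eq_top.mpr hsurj)
  | succ n ih =>
    rw [derivedSeries, derivedSeries, Submodule.map_span, ← ih]
    congr 1
    ext z
    constructor
    · rintro ⟨_, ⟨x, hx, y, hy, rfl⟩, rfl⟩
      exact ⟨f x, Submodule.mem_map_of_mem hx, f y, Submodule.mem_map_of_mem hy, hf x y⟩
    · rintro ⟨_, ⟨x, hx, rfl⟩, _, ⟨y, hy, rfl⟩, rfl⟩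
      exact ⟨D.bracket x y, ⟨x, hx, y, hy, rfl⟩, hf x y⟩

theorem derivedSeries_succ_eq_bot {D : HomLieSuperData K L} {I : Submodule K L}
    (hI : ∀ x ∈ I, ∀ y ∈ I, D.bracket x y = 0) {n : ℕ} (hn : D.derivedSeries n ≤ I) :
    D.derivedSeries (n + 1) = ⊥ := by
  rw [derivedSeries, Submodule.span_eq_bot]
  rintro _ ⟨x, hx, y, hy, rfl⟩
  exact hI x (hn hx) y (hn hy)

theorem isSolvableOfLength_or_succ {D : HomLieSuperData K L} {n : ℕ}
    (hsucc : D.derivedSeries (n + 1) = ⊥) (hlt : ∀ m < n, D.derivedSeries m ≠ ⊥) :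
    D.IsSolvableOfLength n ∨ D.IsSolvableOfLength (n + 1) := by
  by_cases hn : D.derivedSeries n = ⊥
  · exact .inl ⟨hn, hlt⟩
  · refine .inr ⟨hsucc, fun m hm => ?_⟩
    rcases Nat.lt_succ_iff_lt_or_eq.mp hm with hm | rfl
    exacts [hlt m hm, hn]

section TStarExtension

variable {D : HomLieSuperData K L} {ω : L →ₗ[K] L →ₗ[K] Module.Dual K L}
  {Bext : (L × Module.Dual K L) →ₗ[K] (L × Module.Dual K L) →ₗ[K] (L × Module.Dual K L)}

theorem fst_extBracket (hBext : D.IsExtBracket ω Bext)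
    (htop : ⨆ i, (D.grading i).prod (D.dualGrading i) = ⊤) (u v : L × Module.Dual K L) :
    (Bext u v).1 = D.bracket u.1 v.1 := by
  have hB : Bext.compr₂ (LinearMap.fst K L _) = D.bracket.compl₁₂ (LinearMap.fst K L _)
      (LinearMap.fst K L _) := by
    refine LinearMap.ext_of_iSup_eq_top₂ htop htop fun i j u hu v hv => ?_
    rw [Submodule.mem_prod] at hu hv
    exact congrArg Prod.fst (hBext i j u.1 v.1 u.2 v.2 hu.1 hu.2 hv.1 hv.2)
  exact LinearMap.congr_fun₂ hB u v

theorem extBracket_dual_dual (hBext : D.IsExtBracket ω Bext)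
    (htop : ⨆ i, (D.grading i).prod (D.dualGrading i) = ⊤) (f g : Module.Dual K L) :
    Bext (0, f) (0, g) = 0 := by
  let P := LinearMap.inr K L (Module.Dual K L) ∘ₗ LinearMap.snd K L (Module.Dual K L)
  have hB : Bext.compl₁₂ P P = 0 := by
    refine LinearMap.ext_of_iSup_eq_top₂ htop htop fun i j u hu v hv => ?_
    rw [Submodule.mem_prod] at hu hv
    have := hBext i j 0 0 u.2 v.2 (zero_mem _) hu.2 (zero_mem _) hv.2
    simpa [P, coadj, Prod.zero_eq_mk] using this
  exact LinearMap.congr_fun₂ hB (0, f) (0, g)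

theorem map_fst_derivedSeries_extData (hBext : D.IsExtBracket ω Bext)
    (htop : ⨆ i, (D.grading i).prod (D.dualGrading i) = ⊤) (n : ℕ) :
    ((D.extData Bext).derivedSeries n).map (LinearMap.fst K L _) = D.derivedSeries n :=
  map_derivedSeries (D := D.extData Bext) _ (fst_extBracket hBext htop)
    LinearMap.fst_surjective n

theorem derivedSeries_extData_succ_eq_bot (hBext : D.IsExtBracket ω Bext)
    (htop : ⨆ i, (D.grading i).prod (D.dualGrading i) = ⊤) {n : ℕ}
    (hn : D.derivedSeries n = ⊥) : (D.extData Bext).derivedSeries (n + 1) = ⊥ := by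
  refine derivedSeries_succ_eq_bot (I := LinearMap.ker (LinearMap.fst K L _)) ?_ ?_
  · rintro ⟨a, f⟩ (rfl : a = 0) ⟨b, g⟩ (rfl : b = 0)
    exact extBracket_dual_dual hBext htop f g
  · rw [LinearMap.le_ker_iff_map, map_fst_derivedSeries_extData hBext htop, hn]

end TStarExtension

end HomLieSuperData

theorem tStarExtension_solvable_general {K : Type*} [Field K]
    {L : Type*} [AddCommGroup L] [Module K L]
    (D : HomLieSuperData K L)
    (ω : L →ₗ[K] L →ₗ[K] Module.Dual K L)
    (Bext : (L × Module.Dual K L) →ₗ[K] (L × Module.Dual K L) →ₗ[K] (L × Module.Dual K L))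
    (hBext : D.IsExtBracket ω Bext) (hext : (D.extData Bext).IsHomLieSuper)
    (k : ℕ) (hk : D.IsSolvableOfLength k) :
    ∃ r : ℕ, k ≤ r ∧ r ≤ k + 1 ∧ (D.extData Bext).IsSolvableOfLength r := by
  have htop : ⨆ i, (D.grading i).prod (D.dualGrading i) = ⊤ :=
    hext.internal.submodule_iSup_eq_top
  have hlt : ∀ m < k, (D.extData Bext).derivedSeries m ≠ ⊥ := fun m hm hbot =>
    hk.2 m hm <| by
      rw [← HomLieSuperData.map_fst_derivedSeries_extData hBext htop m, hbot, Submodule.map_bot]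
  rcases HomLieSuperData.isSolvableOfLength_or_succ
      (HomLieSuperData.derivedSeries_extData_succ_eq_bot hBext htop hk.1) hlt with h | h
  exacts [⟨k, le_rfl, k.le_succ, h⟩, ⟨k + 1, k.le_succ, le_rfl, h⟩]

/-- If `L` is solvable of length `k`, then any T*-extension `T*_ω L` is
solvable of length `r` with `k ≤ r ≤ k + 1`. -/
theorem tStarExtension_solvable {K : Type*} [Field K]
    {L : Type*} [AddCommGroup L] [Module K L]
    (D : HomLieSuperData K L) (hD : D.IsHomLieSuper) (hco : D.HasCoadjRep)
    (ω : L →ₗ[K] L →ₗ[K] Module.Dual K L)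
    (hωeven : D.OmegaEven ω) (hωskew : D.OmegaSkew ω) (hωcoc : D.OmegaCocycle ω)
    (hωcyc : D.OmegaSupercyclic ω)
    (Bext : (L × Module.Dual K L) →ₗ[K] (L × Module.Dual K L) →ₗ[K] (L × Module.Dual K L))
    (hBext : D.IsExtBracket ω Bext) (hext : (D.extData Bext).IsHomLieSuper)
    (k : ℕ) (hk : D.IsSolvableOfLength k) :
    ∃ r : ℕ, k ≤ r ∧ r ≤ k + 1 ∧ (D.extData Bext).IsSolvableOfLength r :=
  tStarExtension_solvable_general D ω Bext hBext hext k hk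
end

section
/- Let (L,[·,·],α) be a hom-Lie superalgebra over a field K admitting the trivial T*-extension T*_0 L. If L = I ⊕ J is a direct sum of two nonzero hom-Lie superalgebra ideals I and J, then T*_0 L decomposes as the direct sum T*_0 I ⊕ T*_0 J of two nonzero hom-Lie superalgebra ideals of T*_0 L, where T*_0 I := I ⊕ I* with I* = {f ∈ L* : f(J) = 0} and T*_0 J := J ⊕ J* with J* = {f ∈ L* : f(I) = 0}. -/
open Module

/-!
Both `L = I ⊕ J` and `L = L₀ ⊕ L₁` are complementary pairs, and a complementary pair `P ⊕ Q`
gives the complementary pair `(P ⊕ Q^⊥, Q ⊕ P^⊥)` in `L ⊕ L*`. Applied to `I, J` this is the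
direct sum decomposition; applied to the grading it shows `(T*_0 L)_i = L_i ⊕ L_{1-i}^⊥`, so the
gradedness of `I ⊕ J^⊥` reduces to that of `I` and of `J^⊥`, and the latter follows from that of
`J` by splitting a functional along the grading. Finally `[I, J] ⊆ I ∩ J = 0`, which makes the
coadjoint terms of `[x + f, y + g]` vanish on `J` whenever `x ∈ I` and `f ∈ J^⊥`.
-/

namespace Submodule

theorem prod_eq_inf_sup_inf {R M N : Type*} [Semiring R] [AddCommMonoid M] [Module R M]
    [AddCommMonoid N] [Module R N] {A P Q : Submodule R M} {B P' Q' : Submodule R N}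
    (hA : A = A ⊓ P ⊔ A ⊓ Q) (hB : B = B ⊓ P' ⊔ B ⊓ Q') :
    A.prod B = A.prod B ⊓ P.prod P' ⊔ A.prod B ⊓ Q.prod Q' := by
  rw [prod_inf_prod, prod_inf_prod, prod_sup_prod, ← hA, ← hB]

theorem projection_mem_of_eq_inf_sup_inf {R M : Type*} [Ring R] [AddCommGroup M] [Module R M]
    {P Q A : Submodule R M} (h : IsCompl P Q) (hA : A = A ⊓ P ⊔ A ⊓ Q) {x : M} (hx : x ∈ A) :
    P.projection Q h x ∈ A := by
  rw [hA] at hx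
  obtain ⟨a, ha, b, hb, rfl⟩ := mem_sup.1 hx
  rw [map_add, projection_apply_of_mem_left h ha.2, projection_apply_of_mem_right h hb.2,
    add_zero]
  exact ha.1

theorem dualAnnihilator_eq_inf_sup_inf {R M : Type*} [CommRing R] [AddCommGroup M]
    [Module R M] {P Q B : Submodule R M} (h : IsCompl P Q) (hB : B = B ⊓ P ⊔ B ⊓ Q) :
    B.dualAnnihilator =
      B.dualAnnihilator ⊓ Q.dualAnnihilator ⊔ B.dualAnnihilator ⊓ P.dualAnnihilator := by
  refine le_antisymm (fun f hf => ?_) (sup_le inf_le_left inf_le_left)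
  have hB' : B = B ⊓ Q ⊔ B ⊓ P := hB.trans (sup_comm _ _)
  rw [mem_dualAnnihilator] at hf
  refine mem_sup.2 ⟨f ∘ₗ P.projection Q h, ⟨?_, ?_⟩, f ∘ₗ Q.projection P h.symm, ⟨?_, ?_⟩, ?_⟩
  · exact (mem_dualAnnihilator _).2 fun x hx => hf _ (projection_mem_of_eq_inf_sup_inf h hB hx)
  · exact (mem_dualAnnihilator _).2 fun x hx => by
      simp [projection_apply_of_mem_right h hx]
  · exact (mem_dualAnnihilator _).2 fun x hx =>
      hf _ (projection_mem_of_eq_inf_sup_inf h.symm hB' hx)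
  · exact (mem_dualAnnihilator _).2 fun x hx => by
      simp [projection_apply_of_mem_right h.symm hx]
  · rw [← LinearMap.comp_add, projection_add_projection_eq_id, LinearMap.comp_id]

end Submodule

theorem Subspace.isCompl_prod_dualAnnihilator {K V : Type*} [Field K] [AddCommGroup V]
    [Module K V] {P Q : Subspace K V} (h : IsCompl P Q) :
    IsCompl (P.prod Q.dualAnnihilator) (Q.prod P.dualAnnihilator) := by
  have h' := (isCompl_dualAnnihilator h).symm
  rw [isCompl_iff, disjoint_iff, codisjoint_iff] at h h' ⊢
  rw [Submodule.prod_inf_prod, Submodule.prod_sup_prod, h.1, h.2, h'.1, h'.2,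
    Submodule.prod_bot, Submodule.prod_top]
  exact ⟨rfl, rfl⟩

namespace HomLieSuperData

variable {K : Type*} [Field K] {L : Type*} [AddCommGroup L] [Module K L]
  {D : HomLieSuperData K L}

def IsGraded (D : HomLieSuperData K L) (A : Submodule K L) : Prop :=
  A = A ⊓ D.grading 0 ⊔ A ⊓ D.grading 1

def IsIdeal (D : HomLieSuperData K L) (A : Submodule K L) : Prop :=
  ∀ x ∈ A, ∀ y : L, D.bracket x y ∈ A

theorem IsHomLieSuper.isCompl_grading (hD : D.IsHomLieSuper) :
    IsCompl (D.grading 0) (D.grading 1) :=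
  hD.internal.isCompl (by decide) (by ext i; revert i; decide)

theorem dualGrading_zero (D : HomLieSuperData K L) :
    D.dualGrading 0 = (D.grading 1).dualAnnihilator := by
  ext f
  rw [Submodule.mem_dualAnnihilator]
  refine ⟨fun hf => hf 1 (by decide), fun hf j hj => ?_⟩
  obtain rfl : j = 1 := by revert j hj; decide
  exact hf

theorem dualGrading_one (D : HomLieSuperData K L) :
    D.dualGrading 1 = (D.grading 0).dualAnnihilator := by
  ext f
  rw [Submodule.mem_dualAnnihilator]
  refine ⟨fun hf => hf 0 (by decide), fun hf j hj => ?_⟩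
  obtain rfl : j = 0 := by revert j hj; decide
  exact hf

theorem IsHomLieSuper.isCompl_extData_grading (hD : D.IsHomLieSuper)
    (Bext : (L × Module.Dual K L) →ₗ[K] (L × Module.Dual K L) →ₗ[K] (L × Module.Dual K L)) :
    IsCompl ((D.extData Bext).grading 0) ((D.extData Bext).grading 1) := by
  simp only [extData, dualGrading_zero, dualGrading_one]
  exact Subspace.isCompl_prod_dualAnnihilator hD.isCompl_grading

theorem IsGraded.prod_dualAnnihilator (hD : D.IsHomLieSuper) {A B : Submodule K L}
    (hA : D.IsGraded A) (hB : D.IsGraded B)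
    (Bext : (L × Module.Dual K L) →ₗ[K] (L × Module.Dual K L) →ₗ[K] (L × Module.Dual K L)) :
    (D.extData Bext).IsGraded (A.prod B.dualAnnihilator) := by
  simp only [IsGraded, extData, dualGrading_zero, dualGrading_one]
  exact Submodule.prod_eq_inf_sup_inf hA
    (Submodule.dualAnnihilator_eq_inf_sup_inf hD.isCompl_grading hB)

theorem IsIdeal.bracket_mem_of_mem_right (hD : D.IsHomLieSuper) {A : Submodule K L}
    (hA : D.IsGraded A) (hAideal : D.IsIdeal A) (y : L) {x : L} (hx : x ∈ A) :
    D.bracket y x ∈ A := by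
  have homogeneous : ∀ i j, ∀ y ∈ D.grading i, ∀ x ∈ A ⊓ D.grading j, D.bracket y x ∈ A :=
    fun i j y hy x hx => by
      rw [hD.skew i j y hy x hx.2]
      exact A.smul_mem _ (hAideal x hx.1 y)
  obtain ⟨y₀, hy₀, y₁, hy₁, rfl⟩ :=
    Submodule.mem_sup.1 (hD.isCompl_grading.sup_eq_top ▸ Submodule.mem_top (x := y))
  rw [hA] at hx
  obtain ⟨x₀, hx₀, x₁, hx₁, rfl⟩ := Submodule.mem_sup.1 hx
  simp only [map_add, LinearMap.add_apply]
  exact A.add_mem (A.add_mem (homogeneous 0 0 _ hy₀ _ hx₀) (homogeneous 1 0 _ hy₁ _ hx₀))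
    (A.add_mem (homogeneous 0 1 _ hy₀ _ hx₁) (homogeneous 1 1 _ hy₁ _ hx₁))

section TStar

variable {Bext : (L × Module.Dual K L) →ₗ[K] (L × Module.Dual K L) →ₗ[K] (L × Module.Dual K L)}
  {A B : Submodule K L}

/-- The `L*`-component of `[x + f, y + g]` is `π(x) g ± π(y) f`: the first term kills `B`
because `[A, B] = 0`, the second because `[L, B] ⊆ B ⊆ ker f`. -/
theorem extBracket_mem_prod_dualAnnihilator_of_homogeneous (hBext : D.IsExtBracket 0 Bext)
    (hAideal : D.IsIdeal A) (hBright : ∀ y : L, ∀ z ∈ B, D.bracket y z ∈ B)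
    (hAB : ∀ x ∈ A, ∀ z ∈ B, D.bracket x z = 0) (i j : ZMod 2) :
    ∀ p ∈ A.prod B.dualAnnihilator ⊓ (D.extData Bext).grading i,
      ∀ q ∈ (D.extData Bext).grading j, Bext p q ∈ A.prod B.dualAnnihilator := by
  rintro ⟨x, f⟩ ⟨⟨hxA, hfB⟩, hxi, hfi⟩ ⟨y, g⟩ ⟨hyj, hgj⟩
  rw [hBext i j x y f g hxi hfi hyj hgj]
  refine ⟨hAideal x hxA y, (Submodule.mem_dualAnnihilator _).2 fun z hz => ?_⟩
  simp [coadj, hAB x hxA z hz, (Submodule.mem_dualAnnihilator f).1 hfB _ (hBright y z hz)]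

theorem isIdeal_extData_prod_dualAnnihilator (hD : D.IsHomLieSuper)
    (hBext : D.IsExtBracket 0 Bext) (hA : D.IsGraded A) (hB : D.IsGraded B)
    (hAideal : D.IsIdeal A) (hBright : ∀ y : L, ∀ z ∈ B, D.bracket y z ∈ B)
    (hAB : ∀ x ∈ A, ∀ z ∈ B, D.bracket x z = 0) :
    (D.extData Bext).IsIdeal (A.prod B.dualAnnihilator) := by
  intro p hp q
  rw [IsGraded.prod_dualAnnihilator hD hA hB Bext] at hp
  obtain ⟨p₀, hp₀, p₁, hp₁, rfl⟩ := Submodule.mem_sup.1 hp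
  obtain ⟨q₀, hq₀, q₁, hq₁, rfl⟩ := Submodule.mem_sup.1
    ((hD.isCompl_extData_grading Bext).sup_eq_top ▸ Submodule.mem_top (x := q))
  have homogeneous :=
    extBracket_mem_prod_dualAnnihilator_of_homogeneous hBext hAideal hBright hAB
  change Bext (p₀ + p₁) (q₀ + q₁) ∈ _
  simp only [map_add, LinearMap.add_apply]
  exact Submodule.add_mem _
    (Submodule.add_mem _ (homogeneous 0 0 _ hp₀ _ hq₀) (homogeneous 1 0 _ hp₁ _ hq₀))
    (Submodule.add_mem _ (homogeneous 0 1 _ hp₀ _ hq₁) (homogeneous 1 1 _ hp₁ _ hq₁))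

end TStar

end HomLieSuperData

theorem trivial_tStarExtension_decomposition_general {K : Type*} [Field K]
    {L : Type*} [AddCommGroup L] [Module K L]
    (D : HomLieSuperData K L) (hD : D.IsHomLieSuper)
    (Bext : (L × Module.Dual K L) →ₗ[K] (L × Module.Dual K L) →ₗ[K] (L × Module.Dual K L))
    (hBext : D.IsExtBracket 0 Bext)
    (I J : Submodule K L) (hInz : I ≠ ⊥) (hJnz : J ≠ ⊥)
    (hIgraded : I = (I ⊓ D.grading 0) ⊔ (I ⊓ D.grading 1))
    (hJgraded : J = (J ⊓ D.grading 0) ⊔ (J ⊓ D.grading 1))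
    (hIideal : ∀ x ∈ I, ∀ y : L, D.bracket x y ∈ I)
    (hJideal : ∀ x ∈ J, ∀ y : L, D.bracket x y ∈ J)
    (hsum : I ⊔ J = ⊤) (hint : I ⊓ J = ⊥) :
    (I.prod J.dualAnnihilator ≠ ⊥ ∧ J.prod I.dualAnnihilator ≠ ⊥) ∧
    (I.prod J.dualAnnihilator ⊔ J.prod I.dualAnnihilator = ⊤ ∧
      I.prod J.dualAnnihilator ⊓ J.prod I.dualAnnihilator = ⊥) ∧
    (I.prod J.dualAnnihilator =
        (I.prod J.dualAnnihilator ⊓ (D.extData Bext).grading 0) ⊔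
          (I.prod J.dualAnnihilator ⊓ (D.extData Bext).grading 1) ∧
      J.prod I.dualAnnihilator =
        (J.prod I.dualAnnihilator ⊓ (D.extData Bext).grading 0) ⊔
          (J.prod I.dualAnnihilator ⊓ (D.extData Bext).grading 1)) ∧
    (∀ p ∈ I.prod J.dualAnnihilator, ∀ q : L × Module.Dual K L,
        Bext p q ∈ I.prod J.dualAnnihilator) ∧
    (∀ p ∈ J.prod I.dualAnnihilator, ∀ q : L × Module.Dual K L,
        Bext p q ∈ J.prod I.dualAnnihilator) := by
  have hIJ : IsCompl I J := ⟨disjoint_iff.2 hint, codisjoint_iff.2 hsum⟩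
  have hIright := HomLieSuperData.IsIdeal.bracket_mem_of_mem_right hD hIgraded hIideal
  have hJright := HomLieSuperData.IsIdeal.bracket_mem_of_mem_right hD hJgraded hJideal
  have hIJ_zero : ∀ x ∈ I, ∀ z ∈ J, D.bracket x z = 0 := fun x hx z hz =>
    (Submodule.mem_bot K).1 (hint ▸ ⟨hIideal x hx z, hJright x hz⟩)
  have hJI_zero : ∀ x ∈ J, ∀ z ∈ I, D.bracket x z = 0 := fun x hx z hz =>
    (Submodule.mem_bot K).1 (hint ▸ ⟨hIright x hz, hJideal x hx z⟩)
  have hcompl := Subspace.isCompl_prod_dualAnnihilator hIJ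
  exact ⟨⟨fun h => hInz ((Submodule.prod_eq_bot_iff ..).1 h).1,
      fun h => hJnz ((Submodule.prod_eq_bot_iff ..).1 h).1⟩,
    ⟨hcompl.sup_eq_top, hcompl.inf_eq_bot⟩,
    ⟨HomLieSuperData.IsGraded.prod_dualAnnihilator hD hIgraded hJgraded Bext,
      HomLieSuperData.IsGraded.prod_dualAnnihilator hD hJgraded hIgraded Bext⟩,
    HomLieSuperData.isIdeal_extData_prod_dualAnnihilator hD hBext hIgraded hJgraded
      hIideal hJright hIJ_zero,
    HomLieSuperData.isIdeal_extData_prod_dualAnnihilator hD hBext hJgraded hIgraded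
      hJideal hIright hJI_zero⟩

/-- If `L = I ⊕ J` is a direct sum of two nonzero graded ideals, then the
trivial T*-extension `T*_0 L` decomposes as the direct sum of the two nonzero graded ideals
`T*_0 I = I ⊕ I*` and `T*_0 J = J ⊕ J*`, where `I* = J^⊥` and `J* = I^⊥` in `L*`. -/
theorem trivial_tStarExtension_decomposition {K : Type*} [Field K]
    {L : Type*} [AddCommGroup L] [Module K L]
    (D : HomLieSuperData K L) (hD : D.IsHomLieSuper) (hco : D.HasCoadjRep)
    (Bext : (L × Module.Dual K L) →ₗ[K] (L × Module.Dual K L) →ₗ[K] (L × Module.Dual K L))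
    (hBext : D.IsExtBracket 0 Bext) (hext : (D.extData Bext).IsHomLieSuper)
    (I J : Submodule K L) (hInz : I ≠ ⊥) (hJnz : J ≠ ⊥)
    (hIgraded : I = (I ⊓ D.grading 0) ⊔ (I ⊓ D.grading 1))
    (hJgraded : J = (J ⊓ D.grading 0) ⊔ (J ⊓ D.grading 1))
    (hIideal : ∀ x ∈ I, ∀ y : L, D.bracket x y ∈ I)
    (hJideal : ∀ x ∈ J, ∀ y : L, D.bracket x y ∈ J)
    (hsum : I ⊔ J = ⊤) (hint : I ⊓ J = ⊥) :
    (I.prod J.dualAnnihilator ≠ ⊥ ∧ J.prod I.dualAnnihilator ≠ ⊥) ∧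
    (I.prod J.dualAnnihilator ⊔ J.prod I.dualAnnihilator = ⊤ ∧
      I.prod J.dualAnnihilator ⊓ J.prod I.dualAnnihilator = ⊥) ∧
    (I.prod J.dualAnnihilator =
        (I.prod J.dualAnnihilator ⊓ (D.extData Bext).grading 0) ⊔
          (I.prod J.dualAnnihilator ⊓ (D.extData Bext).grading 1) ∧
      J.prod I.dualAnnihilator =
        (J.prod I.dualAnnihilator ⊓ (D.extData Bext).grading 0) ⊔
          (J.prod I.dualAnnihilator ⊓ (D.extData Bext).grading 1)) ∧
    (∀ p ∈ I.prod J.dualAnnihilator, ∀ q : L × Module.Dual K L,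
        Bext p q ∈ I.prod J.dualAnnihilator) ∧
    (∀ p ∈ J.prod I.dualAnnihilator, ∀ q : L × Module.Dual K L,
        Bext p q ∈ J.prod I.dualAnnihilator) :=
  trivial_tStarExtension_decomposition_general D hD Bext hBext I J hInz hJnz hIgraded hJgraded
    hIideal hJideal hsum hint
end
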